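/- arXiv:0905.2191 — 4 statements merged into one kernel-verified Lean document; each statement's English description precedes it below -/
import Mathlib

section
/- Let I ⊆ S be a homogeneous ideal and ψ = (ψ_1,…,ψ_j) a weakly normalized system of homogeneous elements of I. Then: (1) the condition 'deg ψ_i = ν^i(I) for i = 1,…,j' holds if and only if for every i = 1,…,j the element ψ_i has minimal degree among homogeneous elements of I not lying in ⟨ψ_1,…,ψ_{i−1}⟩; (2) if these equivalent conditions hold, then ψ can be extended to a standard base (ψ_1,…,ψ_j,ψ_{j+1},…,ψ_m) of I. -/
open MvPolynomial

/-- `nuSeq I i` is the invariant `ν^i(I)` of Hironaka: the supremum (in `ℕ∞`) of those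
`ν ∈ ℕ` for which there exist homogeneous elements `φ_1, …, φ_{i-1} ∈ I` with
`S_μ ∩ I = S_μ ∩ ⟨φ_1, …, φ_{i-1}⟩` for all `μ < ν`. -/
noncomputable def nuSeq {k : Type*} [Field k] {n : ℕ}
    (I : Ideal (MvPolynomial (Fin n) k)) (i : ℕ) : ℕ∞ :=
  sSup ((fun ν : ℕ => (ν : ℕ∞)) ''
    {ν : ℕ | ∃ φ : Fin (i - 1) → MvPolynomial (Fin n) k,
      (∀ j, φ j ∈ I) ∧ (∀ j, ∃ d : ℕ, (φ j).IsHomogeneous d) ∧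
      ∀ μ : ℕ, μ < ν →
        (homogeneousSubmodule (Fin n) k μ : Set (MvPolynomial (Fin n) k)) ∩ I =
        (homogeneousSubmodule (Fin n) k μ : Set (MvPolynomial (Fin n) k)) ∩
          Ideal.span (Set.range φ)})

/-!
Call a weakly normalized system minimal if each `ψ i` has least degree among the homogeneous
elements of `I` outside `⟨ψ j | j < i⟩`. The heart of the argument is a Steinitz exchange: if a
minimal system `ψ_1, …, ψ_t` lies in the ideal generated by finitely many homogeneous `b ∈ I`,
then the degree `deg ψ_i` component of a representation of `ψ_i` lets one trade some `b` for
`ψ_i`, so there are at least `t` of them. Hence no `i - 1` homogeneous elements of `I` agree with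
`I` up to degree `deg ψ_i`, while `ψ_1, …, ψ_{i-1}` agree with it below that degree: that is,
`ν^i(I) = deg ψ_i`. Conversely, if `deg ψ_i = ν^i(I)` for all `i`, comparing `ψ_i` with an element
of least degree outside `⟨ψ_1, …, ψ_{i-1}⟩` shows inductively that `ψ` is minimal. A minimal
system extends by elements of least degree outside its span; the ascending chain of spans stops,
and since `I` is homogeneous it stops at `I`.
-/

theorem Fin.snoc_comp_castLE {α : Type*} {s t : ℕ} (f : Fin t → α) (h : s + 1 ≤ t) :
    Fin.snoc (f ∘ Fin.castLE (Nat.le_of_succ_le h)) (f ⟨s, h⟩) = f ∘ Fin.castLE h := by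
  rw [← Fin.snoc_init_self (f ∘ Fin.castLE h)]
  rfl

namespace MvPolynomial

variable {σ k : Type*} [Field k]

attribute [local instance] MvPolynomial.gradedAlgebra

theorem homogeneousComponent_mul_of_isHomogeneous {R : Type*} [CommSemiring R]
    {b : MvPolynomial σ R} {m : ℕ} (hb : b.IsHomogeneous m) (c : MvPolynomial σ R) (e : ℕ) :
    homogeneousComponent e (c * b) =
      if m ≤ e then homogeneousComponent (e - m) c * b else 0 := by
  simpa only [DirectSum.decompose, Equiv.coe_fn_mk, decomposition.decompose'_apply] using
    DirectSum.coe_decompose_mul_of_right_mem (homogeneousSubmodule σ R) e (a := c)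
      ((mem_homogeneousSubmodule m b).2 hb)

theorem homogeneousComponent_mem_span {R : Type*} [CommSemiring R] {A : Set (MvPolynomial σ R)}
    (hA : ∀ a ∈ A, ∃ m, a.IsHomogeneous m) {p : MvPolynomial σ R} (hp : p ∈ Ideal.span A)
    (e : ℕ) : homogeneousComponent e p ∈ Ideal.span A :=
  homogeneousComponent_mem_of_mem (Ideal.homogeneous_span _ A hA) hp e

theorem exists_sub_sum_smul_mem_span {A : Set (MvPolynomial σ k)}
    (hA : ∀ a ∈ A, ∃ m, a.IsHomogeneous m) {x : MvPolynomial σ k} {e : ℕ}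
    (hx : x.IsHomogeneous e) {B : Finset (MvPolynomial σ k)}
    (hB : ∀ b ∈ B, ∃ m, b.IsHomogeneous m ∧ (m < e → b ∈ Ideal.span A))
    (hxB : x ∈ Ideal.span (A ∪ B)) :
    ∃ c : MvPolynomial σ k → k, x - ∑ b ∈ B, c b • b ∈ Ideal.span A := by
  classical
  -- Take degree-`e` components: generators of degree `< e` lie in `span A`, those of degree
  -- `> e` contribute nothing, and those of degree `e` only their constant coefficients.
  obtain ⟨y, hy, z, hz, rfl⟩ := Submodule.mem_sup.1 (Ideal.span_union A B ▸ hxB)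
  obtain ⟨f, -, rfl⟩ := Submodule.mem_span_finset.1 hz
  choose! m hm hlow using hB
  refine ⟨fun b => if m b = e then coeff 0 (f b) else 0, ?_⟩
  rw [← homogeneousComponent_eq_self hx, map_add, map_sum, add_sub_assoc,
    ← Finset.sum_sub_distrib]
  refine add_mem (homogeneousComponent_mem_span hA hy e) (sum_mem fun b hb => ?_)
  rw [smul_eq_mul, homogeneousComponent_mul_of_isHomogeneous (hm b hb)]
  rcases lt_trichotomy (m b) e with hlt | rfl | hgt
  · simpa [hlt.le, hlt.ne] using Ideal.mul_mem_left _ _ (hlow b hb hlt)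
  · simp [homogeneousComponent_zero, smul_eq_C_mul]
  · simp [not_le.2 hgt, hgt.ne']

theorem le_of_forall_isHomogeneous_mem {I J : Ideal (MvPolynomial σ k)}
    (hI : ∀ f ∈ I, ∀ e, homogeneousComponent e f ∈ I)
    (h : ∀ g e, g.IsHomogeneous e → g ∈ I → g ∈ J) : I ≤ J := fun f hf =>
  sum_homogeneousComponent f ▸
    sum_mem fun e _ => h _ e (homogeneousComponent_isHomogeneous e f) (hI f hf e)

end MvPolynomial

theorem Ideal.exists_mem_span_insert_erase {k R : Type*} [Field k] [CommRing R]
    [Algebra k R] [DecidableEq R] {A : Set R} {B : Finset R} {x : R} (c : R → k)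
    (hc : x - ∑ b ∈ B, c b • b ∈ Ideal.span A) (hx : x ∉ Ideal.span A) :
    ∃ b ∈ B, b ∈ Ideal.span (insert x A ∪ ↑(B.erase b)) := by
  obtain ⟨b, hb, hcb⟩ : ∃ b ∈ B, c b ≠ 0 := by
    by_contra! h
    rw [Finset.sum_eq_zero fun b hb => by rw [h b hb, zero_smul], sub_zero] at hc
    exact hx hc
  refine ⟨b, hb, ?_⟩
  set J := Ideal.span (insert x A ∪ ↑(B.erase b))
  have hAJ : Ideal.span A ≤ J := Ideal.span_mono fun a ha => Or.inl (Or.inr ha)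
  have hxJ : x ∈ J := Ideal.subset_span (Or.inl (Set.mem_insert x A))
  have hrest : ∑ b' ∈ B.erase b, c b' • b' ∈ J :=
    Submodule.sum_mem _ fun b' hb' =>
      Submodule.smul_of_tower_mem _ _ (Ideal.subset_span (Or.inr hb'))
  have hcb_mem : c b • b ∈ J := by
    have := sub_mem (sub_mem hxJ (hAJ hc)) hrest
    rwa [← Finset.add_sum_erase B _ hb, sub_sub_cancel, add_sub_cancel_right] at this
  simpa [smul_smul, inv_mul_cancel₀ hcb] using Submodule.smul_of_tower_mem J (c b)⁻¹ hcb_mem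

section MinimalSystem

variable {σ k : Type*} [Field k]

def LeDegreesOutside (I J : Ideal (MvPolynomial σ k)) (e : ℕ) : Prop :=
  ∀ g e', g.IsHomogeneous e' → g ∈ I → g ∉ J → e ≤ e'

theorem exists_isHomogeneous_notMem_leDegreesOutside {I J : Ideal (MvPolynomial σ k)}
    (h : ∃ g e, g.IsHomogeneous e ∧ g ∈ I ∧ g ∉ J) :
    ∃ g e, g.IsHomogeneous e ∧ g ∈ I ∧ g ∉ J ∧ LeDegreesOutside I J e := by
  classical
  have hP : ∃ e g, g.IsHomogeneous e ∧ g ∈ I ∧ g ∉ J := let ⟨g, e, hg⟩ := h; ⟨e, g, hg⟩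
  obtain ⟨g, hg, hgI, hgJ⟩ := Nat.find_spec hP
  exact ⟨g, Nat.find hP, hg, hgI, hgJ, fun g' e' hg' hg'I hg'J =>
    Nat.find_min' hP ⟨g', hg', hg'I, hg'J⟩⟩

structure IsMinimalSystem (I : Ideal (MvPolynomial σ k)) {t : ℕ}
    (ψ : Fin t → MvPolynomial σ k) (d : Fin t → ℕ) : Prop where
  isHomogeneous : ∀ i, (ψ i).IsHomogeneous (d i)
  mem : ∀ i, ψ i ∈ I
  notMem_span : ∀ i, ψ i ∉ Ideal.span (ψ '' Set.Iio i)
  leDegreesOutside : ∀ i, LeDegreesOutside I (Ideal.span (ψ '' Set.Iio i)) (d i)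

namespace IsMinimalSystem

variable {I : Ideal (MvPolynomial σ k)} {t : ℕ} {ψ : Fin t → MvPolynomial σ k} {d : Fin t → ℕ}

theorem monotone (h : IsMinimalSystem I ψ d) : Monotone d := fun a b hab =>
  h.leDegreesOutside a (ψ b) (d b) (h.isHomogeneous b) (h.mem b) fun hb =>
    h.notMem_span b (Ideal.span_mono (Set.image_mono (Set.Iio_subset_Iio hab)) hb)

theorem comp_castLE (h : IsMinimalSystem I ψ d) {s : ℕ} (hs : s ≤ t) :
    IsMinimalSystem I (ψ ∘ Fin.castLE hs) (d ∘ Fin.castLE hs) := by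
  have himage (i : Fin s) :
      (ψ ∘ Fin.castLE hs) '' Set.Iio i = ψ '' Set.Iio (Fin.castLE hs i) := by
    rw [Set.image_comp, Fin.image_castLE_Iio]
  exact ⟨fun i => h.isHomogeneous _, fun i => h.mem _,
    fun i => himage i ▸ h.notMem_span _, fun i => himage i ▸ h.leDegreesOutside _⟩

theorem snoc (h : IsMinimalSystem I ψ d) {g : MvPolynomial σ k} {e : ℕ} (hg : g.IsHomogeneous e)
    (hgI : g ∈ I) (hgψ : g ∉ Ideal.span (Set.range ψ))
    (he : LeDegreesOutside I (Ideal.span (Set.range ψ)) e) :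
    IsMinimalSystem I (Fin.snoc ψ g) (Fin.snoc d e) := by
  have himage (i : Fin t) :
      (Fin.snoc ψ g : Fin (t + 1) → _) '' Set.Iio i.castSucc = ψ '' Set.Iio i := by
    rw [← Fin.image_castSucc_Iio, ← Set.image_comp, Fin.snoc_comp_castSucc]
  have himage_last : (Fin.snoc ψ g : Fin (t + 1) → _) '' Set.Iio (Fin.last t) = Set.range ψ := by
    rw [show Set.Iio (Fin.last t) = Set.range Fin.castSucc from (Fin.range_castSucc).symm,
      ← Set.range_comp, Fin.snoc_comp_castSucc]
  refine ⟨fun i => ?_, fun i => ?_, fun i => ?_, fun i => ?_⟩ <;>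
    induction i using Fin.lastCases <;>
    simp only [Fin.snoc_last, Fin.snoc_castSucc, himage, himage_last]
  exacts [hg, h.isHomogeneous _, hgI, h.mem _, hgψ, h.notMem_span _, he, h.leDegreesOutside _]

theorem le_add_card [DecidableEq (MvPolynomial σ k)] (h : IsMinimalSystem I ψ d)
    (B : Finset (MvPolynomial σ k)) (hB : ∀ b ∈ B, b ∈ I ∧ ∃ m, b.IsHomogeneous m) (s : ℕ)
    (hψB : ∀ i, ψ i ∈ Ideal.span (ψ '' {i | (i : ℕ) < s} ∪ B)) : t ≤ s + B.card := by
  induction B using Finset.strongInduction generalizing s with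
  | H B ih =>
  rcases le_or_gt t s with hts | hst
  · omega
  set T : Fin t := ⟨s, hst⟩
  have hA : ∀ a ∈ ψ '' Set.Iio T, ∃ m, a.IsHomogeneous m := by
    rintro _ ⟨i, -, rfl⟩
    exact ⟨d i, h.isHomogeneous i⟩
  have hBT : ∀ b ∈ B, ∃ m, b.IsHomogeneous m ∧
      (m < d T → b ∈ Ideal.span (ψ '' Set.Iio T)) := fun b hb =>
    let ⟨hbI, m, hm⟩ := hB b hb
    ⟨m, hm, fun hlt => by_contra fun hbT => (h.leDegreesOutside T b m hm hbI hbT).not_gt hlt⟩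
  -- Exchange `ψ T` for some `b ∈ B`.
  obtain ⟨c, hc⟩ := exists_sub_sum_smul_mem_span hA (h.isHomogeneous T) hBT (hψB T)
  obtain ⟨b, hb, hbspan⟩ := Ideal.exists_mem_span_insert_erase c hc (h.notMem_span T)
  have hspan : Ideal.span (ψ '' {i | (i : ℕ) < s} ∪ B) ≤
      Ideal.span (ψ '' {i | (i : ℕ) < s + 1} ∪ ↑(B.erase b)) := by
    have hprefix : insert (ψ T) (ψ '' Set.Iio T) ⊆ ψ '' {i | (i : ℕ) < s + 1} := by
      rintro _ (rfl | ⟨i, hi, rfl⟩)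
      · exact ⟨T, Nat.lt_succ_self s, rfl⟩
      · exact ⟨i, Nat.lt_succ_of_lt hi, rfl⟩
    rw [Ideal.span_le]
    rintro y (⟨i, hi, rfl⟩ | hy)
    · exact Ideal.subset_span (Or.inl ⟨i, Nat.lt_succ_of_lt hi, rfl⟩)
    · by_cases hyb : y = b
      · exact Ideal.span_mono (Set.union_subset_union_left _ hprefix) (hyb ▸ hbspan)
      · exact Ideal.subset_span (Or.inr (Finset.mem_erase.2 ⟨hyb, hy⟩))
  have hrec := ih (B.erase b) (Finset.erase_ssubset hb)
    (fun b' hb' => hB b' (Finset.mem_of_mem_erase hb')) (s + 1) fun i => hspan (hψB i)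
  rw [Finset.card_erase_of_mem hb] at hrec
  have := Finset.card_pos.2 ⟨b, hb⟩
  omega

theorem card_le (h : IsMinimalSystem I ψ d) (B : Finset (MvPolynomial σ k))
    (hB : ∀ b ∈ B, b ∈ I ∧ ∃ m, b.IsHomogeneous m) (hψB : ∀ i, ψ i ∈ Ideal.span (B : Set _)) :
    t ≤ B.card := by
  classical
  simpa using h.le_add_card B hB 0 (by simpa using hψB)

theorem exists_extension [Finite σ] (hI : ∀ f ∈ I, ∀ e, homogeneousComponent e f ∈ I)
    (h : IsMinimalSystem I ψ d) :
    ∃ (m : ℕ) (htm : t ≤ m) (ψ' : Fin m → MvPolynomial σ k) (d' : Fin m → ℕ),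
      (∀ i, ψ' (Fin.castLE htm i) = ψ i) ∧ IsMinimalSystem I ψ' d' ∧
        Ideal.span (Set.range ψ') = I := by
  generalize hJ : Ideal.span (Set.range ψ) = J
  induction J using WellFoundedGT.induction generalizing t with
  | _ J ih =>
  subst hJ
  by_cases hout : ∃ g e, g.IsHomogeneous e ∧ g ∈ I ∧ g ∉ Ideal.span (Set.range ψ)
  · obtain ⟨g, e, hg, hgI, hgψ, he⟩ := exists_isHomogeneous_notMem_leDegreesOutside hout
    have hlt : Ideal.span (Set.range ψ) < Ideal.span (Set.range (Fin.snoc ψ g)) := by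
      rw [Fin.range_snoc]
      exact lt_of_le_of_ne (Ideal.span_mono (Set.subset_insert _ _))
        fun heq => hgψ (heq ▸ Ideal.subset_span (Set.mem_insert _ _))
    obtain ⟨m, htm, ψ', d', hext, h', hspan⟩ := ih _ hlt (h.snoc hg hgI hgψ he) rfl
    exact ⟨m, (Nat.le_succ t).trans htm, ψ', d',
      fun i => (hext i.castSucc).trans (Fin.snoc_castSucc ..), h', hspan⟩
  · push Not at hout
    refine ⟨t, le_rfl, ψ, d, fun i => rfl, h, le_antisymm ?_ ?_⟩
    · exact Ideal.span_le.2 (Set.range_subset_iff.2 h.mem)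
    · exact le_of_forall_isHomogeneous_mem hI hout

end IsMinimalSystem

end MinimalSystem

section NuInvariant

variable {k : Type*} [Field k] {n : ℕ} {I : Ideal (MvPolynomial (Fin n) k)}

theorem le_nuSeq {M : ℕ} (φ : Fin M → MvPolynomial (Fin n) k) (hφI : ∀ i, φ i ∈ I)
    (hφ : ∀ i, ∃ d, (φ i).IsHomogeneous d) {D : ℕ}
    (hD : LeDegreesOutside I (Ideal.span (Set.range φ)) D) : (D : ℕ∞) ≤ nuSeq I (M + 1) := by
  refine le_sSup ⟨D, ⟨φ, hφI, hφ, fun μ hμ => ?_⟩, rfl⟩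
  ext g
  simp only [Set.mem_inter_iff, SetLike.mem_coe, mem_homogeneousSubmodule]
  refine and_congr_right fun hg => ⟨fun hgI => by_contra fun hgφ => ?_, fun hgφ => ?_⟩
  · exact (hD g μ hg hgI hgφ).not_gt hμ
  · exact Ideal.span_le.2 (Set.range_subset_iff.2 hφI) hgφ

namespace IsMinimalSystem

theorem nuSeq_le {M : ℕ} {χ : Fin (M + 1) → MvPolynomial (Fin n) k} {D : Fin (M + 1) → ℕ}
    (h : IsMinimalSystem I χ D) : nuSeq I (M + 1) ≤ D (Fin.last M) := by
  classical
  refine sSup_le ?_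
  rintro _ ⟨ν, ⟨φ, hφI, hφ, hagree⟩, rfl⟩
  by_contra! hlt
  -- Every `χ s` has degree `< ν`, so it lies in the span of the `M` elements `φ`.
  have hχφ : ∀ s, χ s ∈ Ideal.span (Set.range φ) := by
    intro s
    have hs : χ s ∈ (homogeneousSubmodule (Fin n) k (D s) : Set _) ∩ I :=
      ⟨(mem_homogeneousSubmodule _ _).2 (h.isHomogeneous s), h.mem s⟩
    rw [hagree (D s) ((h.monotone (Fin.le_last s)).trans_lt (by exact_mod_cast hlt))] at hs
    exact hs.2
  have hcard := h.card_le (Finset.univ.image φ)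
    (by simpa using fun i => ⟨hφI i, hφ i⟩) (by simpa using hχφ)
  have := (Finset.univ.card_image_le (f := φ)).trans_eq (Finset.card_fin M)
  omega

theorem nuSeq_eq {t : ℕ} {ψ : Fin t → MvPolynomial (Fin n) k} {d : Fin t → ℕ}
    (h : IsMinimalSystem I ψ d) (i : Fin t) : nuSeq I (i + 1) = d i := by
  refine le_antisymm (h.comp_castLE i.2).nuSeq_le
    (le_nuSeq (ψ ∘ Fin.castLE i.2.le) (fun _ => h.mem _) (fun _ => ⟨_, h.isHomogeneous _⟩) ?_)
  rw [Set.range_comp, Fin.range_castLE]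
  exact h.leDegreesOutside i

end IsMinimalSystem

theorem isMinimalSystem_of_nuSeq_eq {t : ℕ} {ψ : Fin t → MvPolynomial (Fin n) k}
    {d : Fin t → ℕ} (hhom : ∀ i, (ψ i).IsHomogeneous (d i)) (hmem : ∀ i, ψ i ∈ I)
    (hwn : ∀ i : Fin t, ψ i ∉ Ideal.span (ψ '' Set.Iio i))
    (hν : ∀ i : Fin t, nuSeq I (i + 1) = d i) : IsMinimalSystem I ψ d := by
  suffices H : ∀ s (hs : s ≤ t), IsMinimalSystem I (ψ ∘ Fin.castLE hs) (d ∘ Fin.castLE hs) from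
    H t le_rfl
  intro s hs
  induction s with
  | zero => exact ⟨finZeroElim, finZeroElim, finZeroElim, finZeroElim⟩
  | succ s ih =>
    have hprefix := ih (Nat.le_of_succ_le hs)
    set i : Fin t := ⟨s, hs⟩
    have hrange : Set.range (ψ ∘ Fin.castLE (Nat.le_of_succ_le hs)) = ψ '' Set.Iio i := by
      rw [Set.range_comp, Fin.range_castLE]
      rfl
    have hψi : ψ i ∉ Ideal.span (Set.range (ψ ∘ Fin.castLE (Nat.le_of_succ_le hs))) :=
      hrange ▸ hwn i
    obtain ⟨g, e, hg, hgI, hgψ, he⟩ :=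
      exists_isHomogeneous_notMem_leDegreesOutside ⟨ψ i, d i, hhom i, hmem i, hψi⟩
    -- `ν^{s+1}(I)` is both `d i` and the least degree `e` outside the span of the prefix.
    have hei : (e : ℕ∞) = d i := by
      have hlast := (hprefix.snoc hg hgI hgψ he).nuSeq_eq (Fin.last s)
      rw [Fin.snoc_last, Fin.val_last] at hlast
      exact hlast.symm.trans (hν i)
    have := hprefix.snoc (hhom i) (hmem i) hψi (Nat.cast_injective hei ▸ he)
    rwa [Fin.snoc_comp_castLE ψ hs, Fin.snoc_comp_castLE d hs] at this

end NuInvariant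

theorem stmt1 {k : Type*} [Field k] {n : ℕ} (I : Ideal (MvPolynomial (Fin n) k))
    (hI : ∀ f ∈ I, ∀ d : ℕ, homogeneousComponent d f ∈ I)
    {j : ℕ} (ψ : Fin j → MvPolynomial (Fin n) k) (d : Fin j → ℕ)
    (hhom : ∀ i, (ψ i).IsHomogeneous (d i))
    (hmem : ∀ i, ψ i ∈ I)
    (hwn : ∀ i : Fin j, ψ i ∉ Ideal.span (ψ '' Set.Iio i)) :
    -- (1) the two conditions (ii) and (ii') are equivalent:
    ((∀ i : Fin j, nuSeq I (i + 1) = (d i : ℕ∞)) ↔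
      (∀ i : Fin j, ∀ g : MvPolynomial (Fin n) k, ∀ e : ℕ,
        g.IsHomogeneous e → g ∈ I → g ∉ Ideal.span (ψ '' Set.Iio i) → d i ≤ e)) ∧
    -- (2) if these conditions hold, ψ extends to a standard base of I:
    ((∀ i : Fin j, nuSeq I (i + 1) = (d i : ℕ∞)) →
      ∃ (m : ℕ) (hjm : j ≤ m) (ψ' : Fin m → MvPolynomial (Fin n) k) (d' : Fin m → ℕ),
        (∀ i : Fin j, ψ' (Fin.castLE hjm i) = ψ i) ∧
        (∀ i, (ψ' i).IsHomogeneous (d' i)) ∧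
        Monotone d' ∧
        (∀ i : Fin m, ψ' i ∉ Ideal.span (ψ' '' Set.Iio i)) ∧
        Ideal.span (Set.range ψ') = I) := by
  have hiff : (∀ i : Fin j, nuSeq I (i + 1) = (d i : ℕ∞)) ↔
      ∀ i : Fin j, LeDegreesOutside I (Ideal.span (ψ '' Set.Iio i)) (d i) :=
    ⟨fun hν => (isMinimalSystem_of_nuSeq_eq hhom hmem hwn hν).leDegreesOutside,
      fun hmin => (IsMinimalSystem.mk hhom hmem hwn hmin).nuSeq_eq⟩
  refine ⟨hiff, fun hν => ?_⟩
  obtain ⟨m, hjm, ψ', d', hext, h', hspan⟩ :=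
    (isMinimalSystem_of_nuSeq_eq hhom hmem hwn hν).exists_extension hI
  exact ⟨m, hjm, ψ', d', hext, h'.isHomogeneous, h'.monotone, h'.notMem_span, hspan⟩
end

section
/- Let A be a finitely generated graded algebra of Krull dimension d over a field k, generated as a k-algebra by its degree-one part A_1. Then H(A)(n) ≥ Φ^{(d)}(n) for all n ∈ ℕ, and equality holds for all n if and only if A is isomorphic as a graded k-algebra to the polynomial ring k[X_1,…,X_d] with its standard grading. -/
/-- `Φ^{(t)}(n) = binom(n+t-1, n)`, the Hilbert function of a polynomial ring
in `t` variables. -/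
def phiFn (t n : ℕ) : ℕ := Nat.choose (n + t - 1) n

/-!
Since `A` is generated by `A₁`, every graded piece is a power: `Aₙ = A₁ ^ n`.

A chain of primes `𝔭₀ < ⋯ < 𝔭_d` gives `d` elements of `A` that are algebraically independent
modulo `𝔭₀` (take `x ∈ 𝔭₁ \ 𝔭₀` and induct along the chain), so the domain `A ⧸ 𝔭₀` has
transcendence degree at least `d`. A transcendence basis of it can be chosen among the images of
`A₁`, which yields `θ₁, …, θ_d ∈ A₁` algebraically independent in `A`. The evaluation map
`aeval θ` then embeds the forms of degree `n`, a space of dimension `Φ^{(d)}(n)`, into `Aₙ`.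

If `dim A₁ = d`, the `θᵢ` are a basis of `A₁`, so `aeval θ` is also surjective, and it maps the
forms of degree `n` onto `A₁ ^ n = Aₙ`.
-/

open MvPolynomial Submodule Cardinal

universe u v

section GradedAlgebra

variable {ι R A : Type*} [DecidableEq ι] [AddMonoid ι] [CommSemiring R] [Semiring A]
  [Algebra R A] (𝒜 : ι → Submodule R A) [GradedAlgebra 𝒜]

theorem GradedAlgebra.mem_of_mem_iSup_of_le {M : ι → Submodule R A} (hM : ∀ i, M i ≤ 𝒜 i)
    {i : ι} {x : A} (hxi : x ∈ 𝒜 i) (hx : x ∈ ⨆ j, M j) : x ∈ M i := by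
  have hproj : (⨆ j, M j).map (proj 𝒜 i) ≤ M i := by
    rw [Submodule.map_iSup]
    refine iSup_le fun j => map_le_iff_le_comap.2 fun y hy => ?_
    rw [mem_comap, proj_apply]
    by_cases hji : j = i
    · subst hji
      rwa [DirectSum.decompose_of_mem_same 𝒜 (hM j hy)]
    · rw [DirectSum.decompose_of_mem_ne 𝒜 (hM j hy) hji]
      exact zero_mem _
  have hprojx : proj 𝒜 i x = x := by
    rw [proj_apply, DirectSum.decompose_of_mem_same 𝒜 hxi]
  exact hprojx ▸ hproj (mem_map_of_mem hx)

end GradedAlgebra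

section Adjoin

variable {R A : Type*} [CommSemiring R] [Semiring A] [Algebra R A]

theorem Algebra.toSubmodule_adjoin_eq_iSup_pow (W : Submodule R A) :
    Subalgebra.toSubmodule (adjoin R (W : Set A)) = ⨆ n : ℕ, W ^ n := by
  refine le_antisymm (fun x hx => ?_) (iSup_le fun n => ?_)
  · have hmul : (⨆ i : ℕ, W ^ i) * (⨆ j : ℕ, W ^ j) ≤ ⨆ n : ℕ, W ^ n := by
      simp_rw [Submodule.iSup_mul, Submodule.mul_iSup, ← pow_add]
      exact iSup₂_le fun i j => le_iSup (fun n => W ^ n) (i + j)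
    induction hx using adjoin_induction with
    | mem y hy => exact Submodule.mem_iSup_of_mem 1 (by rwa [pow_one])
    | algebraMap r => exact Submodule.mem_iSup_of_mem 0 (by simp [Submodule.algebraMap_mem r])
    | add y z _ _ hy hz => exact add_mem hy hz
    | mul y z _ _ hy hz => exact hmul (mul_mem_mul hy hz)
  · induction n with
    | zero => exact one_le.2 (adjoin R _).one_mem
    | succ n ih =>
      rw [pow_succ]
      exact mul_le.2 fun a ha b hb => (adjoin R _).mul_mem (ih ha) (subset_adjoin hb)

theorem Algebra.exists_finite_subset_of_mem_adjoin {s : Set A} {x : A} (hx : x ∈ adjoin R s) :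
    ∃ t ⊆ s, t.Finite ∧ x ∈ adjoin R t := by
  induction hx using adjoin_induction with
  | mem y hy => exact ⟨{y}, by simpa using hy, Set.finite_singleton y, subset_adjoin rfl⟩
  | algebraMap r => exact ⟨∅, Set.empty_subset s, Set.finite_empty, Subalgebra.algebraMap_mem _ r⟩
  | add y z _ _ hy hz =>
    obtain ⟨t, hts, ht, hyt⟩ := hy
    obtain ⟨u, hus, hu, hzu⟩ := hz
    exact ⟨t ∪ u, Set.union_subset hts hus, ht.union hu,
      add_mem (adjoin_mono Set.subset_union_left hyt) (adjoin_mono Set.subset_union_right hzu)⟩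
  | mul y z _ _ hy hz =>
    obtain ⟨t, hts, ht, hyt⟩ := hy
    obtain ⟨u, hus, hu, hzu⟩ := hz
    exact ⟨t ∪ u, Set.union_subset hts hus, ht.union hu,
      mul_mem (adjoin_mono Set.subset_union_left hyt) (adjoin_mono Set.subset_union_right hzu)⟩

theorem Algebra.FiniteType.exists_finite_subset_adjoin_eq_top [FiniteType R A] {s : Set A}
    (hs : adjoin R s = ⊤) : ∃ t ⊆ s, t.Finite ∧ adjoin R t = ⊤ := by
  obtain ⟨S, hS⟩ := FiniteType.out (R := R) (A := A)
  have hmem (x : A) : ∃ t ⊆ s, t.Finite ∧ x ∈ adjoin R t :=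
    exists_finite_subset_of_mem_adjoin (hs ▸ mem_top)
  choose t hts ht hxt using hmem
  refine ⟨⋃ x ∈ S, t x, Set.iUnion₂_subset fun x _ => hts x,
    S.finite_toSet.biUnion fun x _ => ht x, ?_⟩
  rw [← top_le_iff, ← hS, adjoin_le_iff]
  exact fun x hx => adjoin_mono (Set.subset_biUnion_of_mem hx) (hxt x)

end Adjoin

section NatGraded

variable {R A : Type*} [CommSemiring R] [Semiring A] [Algebra R A]
  (𝒜 : ℕ → Submodule R A) [GradedAlgebra 𝒜]

namespace GradedAlgebra

theorem pow_le_of_le_one {W : Submodule R A} (hW : W ≤ 𝒜 1) (n : ℕ) : W ^ n ≤ 𝒜 n := by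
  induction n with
  | zero => exact one_le.2 (SetLike.one_mem_graded 𝒜)
  | succ n ih =>
    rw [pow_succ]
    exact mul_le.2 fun a ha b hb => SetLike.mul_mem_graded (ih ha) (hW hb)

theorem eq_pow_of_adjoin_eq_top {W : Submodule R A} (hW : W ≤ 𝒜 1)
    (htop : Algebra.adjoin R (W : Set A) = ⊤) (n : ℕ) : 𝒜 n = W ^ n := by
  refine le_antisymm (fun x hx => ?_) (pow_le_of_le_one 𝒜 hW n)
  refine mem_of_mem_iSup_of_le 𝒜 (pow_le_of_le_one 𝒜 hW) hx ?_
  rw [← Algebra.toSubmodule_adjoin_eq_iSup_pow, htop]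
  trivial

theorem fg_of_finiteType [Algebra.FiniteType R A]
    (hgen : Algebra.adjoin R ((𝒜 1 : Submodule R A) : Set A) = ⊤) (n : ℕ) : (𝒜 n).FG := by
  obtain ⟨t, ht1, ht, htop⟩ := Algebra.FiniteType.exists_finite_subset_adjoin_eq_top hgen
  have h1 : 𝒜 1 = span R t := by
    rw [eq_pow_of_adjoin_eq_top 𝒜 (span_le.2 ht1) (by rw [Algebra.adjoin_span, htop]) 1, pow_one]
  rw [eq_pow_of_adjoin_eq_top 𝒜 le_rfl hgen n, h1]
  exact (fg_def.2 ⟨t, ht, rfl⟩).pow n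

end GradedAlgebra

end NatGraded

theorem Polynomial.eq_zero_of_eval₂_mem {C A : Type*} [Semiring C] [CommRing A] (φ : C →+* A)
    {q p : Ideal A} [q.IsPrime] (hqp : q ≤ p) {x : A} (hxp : x ∈ p) (hxq : x ∉ q)
    (hφ : ∀ c, φ c ∈ p → c = 0) (P : Polynomial C) (hP : P.eval₂ φ x ∈ q) : P = 0 := by
  induction P using Polynomial.recOnHorner with
  | M0 => rfl
  | MC P a hP0 ha _ =>
    refine absurd (hφ a ?_) ha
    have hPx : P.eval₂ φ x ∈ p := by
      rw [← Polynomial.divX_mul_X_add P, hP0, map_zero, add_zero, Polynomial.eval₂_mul_X]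
      exact p.mul_mem_left _ hxp
    have := p.sub_mem (hqp hP) hPx
    rwa [Polynomial.eval₂_add, Polynomial.eval₂_C, add_sub_cancel_left] at this
  | MX P _ ih =>
    rw [Polynomial.eval₂_mul_X] at hP
    rw [ih ((Ideal.IsPrime.mem_or_mem ‹_› hP).resolve_right hxq), zero_mul]

theorem MvPolynomial.aeval_cons_eq_eval₂_finSuccEquiv {R A : Type*} [CommSemiring R]
    [CommSemiring A] [Algebra R A] {n : ℕ} (x : A) (θ : Fin n → A)
    (f : MvPolynomial (Fin (n + 1)) R) :
    aeval (Fin.cons x θ : Fin (n + 1) → A) f =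
      (finSuccEquiv R n f).eval₂ (aeval θ : MvPolynomial (Fin n) R →ₐ[R] A).toRingHom x := by
  induction f using MvPolynomial.induction_on with
  | C r => simp [finSuccEquiv_apply]
  | add f g hf hg => simp [hf, hg]
  | mul_X f i hf =>
    induction i using Fin.cases <;> simp [hf, finSuccEquiv_X_zero, finSuccEquiv_X_succ]

section KrullDimension

variable {k A : Type*} [Field k] [CommRing A] [Algebra k A]

theorem algebraicIndependent_quotient_mk_iff {ι : Type*} (I : Ideal A) (x : ι → A) :
    AlgebraicIndependent k (Ideal.Quotient.mkₐ k I ∘ x) ↔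
      ∀ f : MvPolynomial ι k, aeval x f ∈ I → f = 0 := by
  simp only [algebraicIndependent_iff, ← Ideal.Quotient.eq_zero_iff_mem]
  refine forall_congr' fun f => imp_congr_left ?_
  rw [← Ideal.Quotient.mkₐ_eq_mk k, comp_aeval_apply]
  rfl

theorem eq_zero_of_aeval_cons_mem {q p : Ideal A} [q.IsPrime] (hqp : q ≤ p) {x : A}
    (hxp : x ∈ p) (hxq : x ∉ q) {n : ℕ} {θ : Fin n → A}
    (hθ : ∀ f : MvPolynomial (Fin n) k, aeval θ f ∈ p → f = 0)
    (f : MvPolynomial (Fin (n + 1)) k) (hf : aeval (Fin.cons x θ : Fin (n + 1) → A) f ∈ q) :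
    f = 0 := by
  rw [aeval_cons_eq_eval₂_finSuccEquiv] at hf
  simpa using Polynomial.eq_zero_of_eval₂_mem _ hqp hxp hxq hθ _ hf

theorem exists_algebraicIndependent_quotient_of_strictMono {n : ℕ}
    (q : Fin (n + 1) → PrimeSpectrum A) (hq : StrictMono q) :
    ∃ x : Fin n → A, AlgebraicIndependent k (Ideal.Quotient.mkₐ k (q 0).asIdeal ∘ x) := by
  induction n with
  | zero => exact ⟨Fin.elim0, algebraicIndependent_empty_type_iff.2 (algebraMap k _).injective⟩
  | succ n ih =>
    obtain ⟨θ, hθ⟩ := ih (q ∘ Fin.succ) (hq.comp Fin.strictMono_succ)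
    obtain ⟨x, hx1, hx0⟩ :=
      SetLike.exists_of_lt ((PrimeSpectrum.asIdeal_lt_asIdeal _ _).2 (hq Fin.zero_lt_one))
    refine ⟨Fin.cons x θ, ?_⟩
    rw [algebraicIndependent_quotient_mk_iff] at hθ ⊢
    exact eq_zero_of_aeval_cons_mem
      ((PrimeSpectrum.asIdeal_le_asIdeal _ _).2 (hq.monotone (Fin.zero_le 1))) hx1 hx0 hθ

theorem AlgebraicIndependent.exists_of_adjoin_eq_top {R : Type*} {D : Type u} {ι : Type v}
    [CommRing R] [CommRing D] [IsDomain D] [Algebra R D] {s : Set D}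
    (hs : Algebra.adjoin R s = ⊤) {x : ι → D} (hx : AlgebraicIndependent R x) :
    ∃ y : ι → D, (∀ i, y i ∈ s) ∧ AlgebraicIndependent R y := by
  have : Nontrivial R := (algebraMap R D).domain_nontrivial
  have : FaithfulSMul R D :=
    (faithfulSMul_iff_algebraMap_injective R D).2 hx.algebraMap_injective
  have : Algebra.IsAlgebraic (Algebra.adjoin R s) D :=
    ⟨fun z => isAlgebraic_algebraMap (⟨z, hs ▸ Algebra.mem_top⟩ : Algebra.adjoin R s)⟩
  obtain ⟨t, hts, ht⟩ := exists_isTranscendenceBasis_subset (R := R) s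
  have hcard : lift.{u} #ι ≤ lift.{v} #t := ht.cardinalMk_eq_trdeg ▸ hx.lift_cardinalMk_le_trdeg
  obtain ⟨e⟩ := lift_mk_le'.1 hcard
  exact ⟨fun i => e i, fun i => hts (e i).2, ht.1.comp e e.injective⟩

theorem exists_algebraicIndependent_of_le_ringKrullDim {s : Set A}
    (hs : Algebra.adjoin k s = ⊤) {d : ℕ} (hd : d ≤ ringKrullDim A) :
    ∃ θ : Fin d → A, (∀ i, θ i ∈ s) ∧ AlgebraicIndependent k θ := by
  obtain ⟨p, rfl⟩ := Order.le_krullDim_iff.1 hd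
  obtain ⟨x, hx⟩ := exists_algebraicIndependent_quotient_of_strictMono (k := k) p p.strictMono
  let π := Ideal.Quotient.mkₐ k (p 0).asIdeal
  have hπs : Algebra.adjoin k (π '' s) = ⊤ := by
    rw [← AlgHom.map_adjoin, hs, Algebra.map_top, AlgHom.range_eq_top]
    exact Ideal.Quotient.mkₐ_surjective k _
  obtain ⟨y, hys, hy⟩ := hx.exists_of_adjoin_eq_top hπs
  choose θ hθs hθy using hys
  have hπθ : π ∘ θ = y := funext hθy
  exact ⟨θ, hθs, .of_comp π (hπθ ▸ hy)⟩

end KrullDimension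

theorem MvPolynomial.finrank_homogeneousSubmodule (σ R : Type*) [Finite σ] [CommRing R]
    [Nontrivial R] (n : ℕ) :
    Module.finrank R (homogeneousSubmodule σ R n) = (Nat.card σ + n - 1).choose n := by
  classical
  let e : homogeneousSubmodule σ R n ≃ₗ[R] ({s : σ →₀ ℕ | s.degree = n} →₀ R) :=
    LinearEquiv.ofEq _ _ (homogeneousSubmodule_eq_finsupp_supported σ R n) ≪≫ₗ
      AddMonoidAlgebra.supportedEquivFinsupp _
  let e' : Sym σ n ≃ {s : σ →₀ ℕ | s.degree = n} := Sym.equivNatSum σ n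
  have := Fintype.ofFinite σ
  have : Fintype {s : σ →₀ ℕ | s.degree = n} := Fintype.ofEquiv _ e'
  rw [e.finrank_eq, Module.finrank_finsupp_self, ← Nat.card_eq_fintype_card, ← Nat.card_congr e',
    Sym.natCard_sym_eq_choose]

theorem MvPolynomial.finrank_homogeneousSubmodule_eq_phiFn (R : Type*) [CommRing R]
    [Nontrivial R] (d n : ℕ) : Module.finrank R (homogeneousSubmodule (Fin d) R n) = phiFn d n := by
  rw [finrank_homogeneousSubmodule, Nat.card_fin, phiFn, add_comm d n]

theorem MvPolynomial.map_aeval_homogeneousSubmodule {σ R A : Type*} [CommSemiring R]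
    [CommSemiring A] [Algebra R A] (θ : σ → A) (n : ℕ) :
    (homogeneousSubmodule σ R n).map (aeval θ).toLinearMap = span R (Set.range θ) ^ n := by
  rw [← homogeneousSubmodule_one_pow, Submodule.map_pow, homogeneousSubmodule_one_eq_span_X,
    Submodule.map_span, ← Set.range_comp]
  congr
  ext i
  simp

section HilbertFunction

variable {k A : Type*} [Field k] [CommRing A] [Algebra k A] (𝒜 : ℕ → Submodule k A)

theorem AlgebraicIndependent.finrank_span_pow {d : ℕ} {θ : Fin d → A}
    (hθ : AlgebraicIndependent k θ) (n : ℕ) :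
    Module.finrank k ↥(span k (Set.range θ) ^ n) = phiFn d n := by
  rw [← map_aeval_homogeneousSubmodule,
    ← (equivMapOfInjective _ (show Function.Injective (aeval θ).toLinearMap from hθ) _).finrank_eq,
    finrank_homogeneousSubmodule_eq_phiFn]

theorem finrank_eq_phiFn_of_algEquiv {d : ℕ} (e : A ≃ₐ[k] MvPolynomial (Fin d) k)
    (he : ∀ (n : ℕ) (x : A), x ∈ 𝒜 n ↔ e x ∈ homogeneousSubmodule (Fin d) k n) (n : ℕ) :
    Module.finrank k (𝒜 n) = phiFn d n := by
  have hmap : (𝒜 n).map e.toLinearEquiv.toLinearMap = homogeneousSubmodule (Fin d) k n := by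
    ext y
    simp [mem_map_equiv, he]
  rw [← LinearEquiv.finrank_map_eq e.toLinearEquiv, hmap, finrank_homogeneousSubmodule_eq_phiFn]

variable [GradedAlgebra 𝒜] {d : ℕ} {θ : Fin d → A}

theorem phiFn_le_finrank (hθ1 : ∀ i, θ i ∈ 𝒜 1) (hθ : AlgebraicIndependent k θ) (n : ℕ)
    [Module.Finite k (𝒜 n)] : phiFn d n ≤ Module.finrank k (𝒜 n) :=
  hθ.finrank_span_pow n ▸ finrank_mono
    (GradedAlgebra.pow_le_of_le_one 𝒜 (span_le.2 (Set.range_subset_iff.2 hθ1)) n)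

theorem exists_algEquiv_mvPolynomial_of_finrank_eq
    (hgen : Algebra.adjoin k ((𝒜 1 : Submodule k A) : Set A) = ⊤) (hθ1 : ∀ i, θ i ∈ 𝒜 1)
    (hθ : AlgebraicIndependent k θ) [Module.Finite k (𝒜 1)]
    (hrank : Module.finrank k (𝒜 1) = d) :
    ∃ e : A ≃ₐ[k] MvPolynomial (Fin d) k, ∀ (n : ℕ) (x : A),
      x ∈ 𝒜 n ↔ e x ∈ homogeneousSubmodule (Fin d) k n := by
  have hspan : span k (Set.range θ) = 𝒜 1 :=
    eq_of_le_of_finrank_eq (span_le.2 (Set.range_subset_iff.2 hθ1))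
      (by rw [finrank_span_eq_card hθ.linearIndependent, Fintype.card_fin, hrank])
  have hsurj : Function.Surjective (aeval θ : MvPolynomial (Fin d) k →ₐ[k] A) := by
    rw [← AlgHom.range_eq_top, ← Algebra.adjoin_range_eq_range_aeval, ← Algebra.adjoin_span,
      hspan, hgen]
  let e := AlgEquiv.ofBijective (aeval θ) ⟨hθ, hsurj⟩
  refine ⟨e.symm, fun n x => ?_⟩
  rw [GradedAlgebra.eq_pow_of_adjoin_eq_top 𝒜 le_rfl hgen n, ← hspan,
    ← map_aeval_homogeneousSubmodule]
  exact mem_map_equiv (e := e.toLinearEquiv) (p := homogeneousSubmodule (Fin d) k n)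

end HilbertFunction

theorem stmt5 {k A : Type*} [Field k] [CommRing A] [Algebra k A]
    (𝒜 : ℕ → Submodule k A) [GradedAlgebra 𝒜]
    (hfg : Algebra.FiniteType k A)
    (hgen : Algebra.adjoin k ((𝒜 1 : Submodule k A) : Set A) = ⊤)
    (d : ℕ) (hdim : ringKrullDim A = d) :
    (∀ n : ℕ, phiFn d n ≤ Module.finrank k (𝒜 n)) ∧
    ((∀ n : ℕ, Module.finrank k (𝒜 n) = phiFn d n) ↔
      ∃ e : A ≃ₐ[k] MvPolynomial (Fin d) k, ∀ (n : ℕ) (x : A),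
        x ∈ 𝒜 n ↔ e x ∈ MvPolynomial.homogeneousSubmodule (Fin d) k n) := by
  have hfin (n : ℕ) : Module.Finite k (𝒜 n) :=
    Module.Finite.iff_fg.2 (GradedAlgebra.fg_of_finiteType 𝒜 hgen n)
  obtain ⟨θ, hθ1, hθ⟩ := exists_algebraicIndependent_of_le_ringKrullDim hgen hdim.ge
  refine ⟨fun n => phiFn_le_finrank 𝒜 hθ1 hθ n, fun hrank => ?_,
    fun ⟨e, he⟩ => finrank_eq_phiFn_of_algEquiv 𝒜 e he⟩
  exact exists_algEquiv_mvPolynomial_of_finrank_eq 𝒜 hgen hθ1 hθ (by simpa [phiFn] using hrank 1)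
end

section
/- Let a = (a_1 ≥ a_2 ≥ … ≥ a_s ≥ 0) and b = (b_1 ≥ b_2 ≥ … ≥ b_t ≥ 0) be weakly decreasing tuples of nonnegative integers (s, t ≥ 1), with associated Macaulay polynomials P_a and P_b. Then P_a(n) ≥ P_b(n) for all sufficiently large n if and only if a ≥ b in the lexicographic order, where the shorter tuple is padded on the right with entries −∞ until both tuples have the same length. In particular, the map a ↦ P_a is injective, and the set of Macaulay polynomials is totally ordered by eventual comparison. -/
/-- The value at the integer `n` of the Macaulay polynomial
`P_a(T) = Σ_{i=1}^{s} binom(T + a_i − i + 1, a_i)` associated to a weakly decreasing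
tuple `a = (a_1 ≥ … ≥ a_s ≥ 0)` (here indexed by `i : Fin s`, zero-based, so the
`i`-th summand is `binom(T + a_i − i, a_i)` evaluated at `n`). -/
noncomputable def macaulayEval {s : ℕ} (a : Fin s → ℕ) (n : ℤ) : ℚ :=
  ∑ i : Fin s,
    (∏ j ∈ Finset.range (a i), ((n : ℚ) + (a i : ℚ) - (i : ℕ) - (j : ℚ))) /
      (Nat.factorial (a i) : ℚ)

/-- The tuple `a : Fin s → ℕ` padded on the right with `⊥ = −∞`. -/
def padTuple {s : ℕ} (a : Fin s → ℕ) : ℕ → WithBot ℕ :=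
  fun i => if h : i < s then ((a ⟨i, h⟩ : ℕ) : WithBot ℕ) else ⊥

/-- Lexicographic comparison `f ≥ g` of sequences with values in `WithBot ℕ`. -/
def LexGe (f g : ℕ → WithBot ℕ) : Prop :=
  f = g ∨ ∃ i : ℕ, (∀ j < i, f j = g j) ∧ g i < f i

/-!
The `i`-th summand `binom(T + a_i − i, a_i)` of `P_a` has degree `a_i` and leading coefficient
`1 / a_i!`. Suppose the padded tuples first differ at position `i`, with `a_i > b_i`. The summands
before `i` cancel in `P_a − P_b`; since both tuples decrease, every later summand of `P_b` has
degree `< a_i`, and every later summand of `P_a` has degree `≤ a_i` with a nonnegative coefficient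
of `T^{a_i}`. Hence `P_a − P_b` has degree `a_i` and a positive leading coefficient, so it is
eventually positive. As the lexicographic order is total, this gives all three claims.
-/

open Polynomial Filter Finset
open scoped Nat

/-- The Macaulay summand `binom(X + c − k, c)`; a padding entry `c = ⊥` gives `0`. -/
noncomputable def macaulayTerm (c : WithBot ℕ) (k : ℕ) : ℚ[X] :=
  WithBot.recBotCoe 0
    (fun c => C (c ! : ℚ)⁻¹ * ∏ j ∈ range c, (X + C ((c : ℚ) - k - j))) c

@[simp]
lemma macaulayTerm_bot (k : ℕ) : macaulayTerm ⊥ k = 0 := rfl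

lemma macaulayTerm_coe (c k : ℕ) :
    macaulayTerm c k = C (c ! : ℚ)⁻¹ * ∏ j ∈ range c, (X + C ((c : ℚ) - k - j)) := rfl

lemma eval_macaulayTerm_coe (c k : ℕ) (x : ℚ) :
    (macaulayTerm c k).eval x = (∏ j ∈ range c, (x + c - k - j)) / c ! := by
  rw [macaulayTerm_coe, eval_mul, eval_C, eval_prod, div_eq_inv_mul]
  congr 1
  refine prod_congr rfl fun j _ => ?_
  simp only [eval_add, eval_X, eval_C]
  ring

section ProdXAddC

variable {R ι : Type*} [CommSemiring R] (s : Finset ι) (z : ι → R)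

lemma monic_prod_X_add_C : (∏ j ∈ s, (X + C (z j))).Monic :=
  monic_prod_of_monic _ _ fun _ _ => monic_X_add_C _

lemma natDegree_prod_X_add_C [Nontrivial R] : (∏ j ∈ s, (X + C (z j))).natDegree = #s := by
  rw [natDegree_prod_of_monic _ _ fun _ _ => monic_X_add_C _]
  simp

end ProdXAddC

lemma natDegree_macaulayTerm_coe (c k : ℕ) : (macaulayTerm c k).natDegree = c := by
  rw [macaulayTerm_coe, natDegree_C_mul (by positivity), natDegree_prod_X_add_C,
    card_range]

lemma coeff_macaulayTerm_coe_self (c k : ℕ) :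
    (macaulayTerm c k).coeff c = (c ! : ℚ)⁻¹ := by
  have hmonic := (monic_prod_X_add_C (range c) fun j => (c : ℚ) - k - j).coeff_natDegree
  rw [natDegree_prod_X_add_C, card_range] at hmonic
  rw [macaulayTerm_coe, coeff_C_mul, hmonic, mul_one]

lemma natDegree_macaulayTerm_le {c : WithBot ℕ} {d : ℕ} (k : ℕ) (h : c ≤ d) :
    (macaulayTerm c k).natDegree ≤ d := by
  induction c using WithBot.recBotCoe with
  | bot => simp
  | coe c =>
    rw [← Nat.cast_withBot] at h ⊢
    rw [natDegree_macaulayTerm_coe]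
    exact_mod_cast h

lemma coeff_macaulayTerm_of_lt {c : WithBot ℕ} {d : ℕ} (k : ℕ) (h : c < d) :
    (macaulayTerm c k).coeff d = 0 := by
  induction c using WithBot.recBotCoe with
  | bot => simp
  | coe c =>
    rw [← Nat.cast_withBot] at h ⊢
    exact coeff_eq_zero_of_natDegree_lt (by rw [natDegree_macaulayTerm_coe]; exact_mod_cast h)

lemma coeff_macaulayTerm_nonneg {c : WithBot ℕ} {d : ℕ} (k : ℕ) (h : c ≤ d) :
    0 ≤ (macaulayTerm c k).coeff d := by
  rcases h.lt_or_eq with h | rfl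
  · rw [coeff_macaulayTerm_of_lt k h]
  · rw [coeff_macaulayTerm_coe_self]
    positivity

noncomputable def macaulayPoly (f : ℕ → WithBot ℕ) (L : ℕ) : ℚ[X] :=
  ∑ j ∈ range L, macaulayTerm (f j) j

lemma padTuple_of_le {s : ℕ} (a : Fin s → ℕ) {j : ℕ} (hj : s ≤ j) : padTuple a j = ⊥ :=
  dif_neg hj.not_gt

lemma padTuple_antitone {s : ℕ} {a : Fin s → ℕ} (ha : Antitone a) :
    Antitone (padTuple a) := by
  intro i j hij
  by_cases hj : j < s
  · simp only [padTuple, dif_pos hj, dif_pos (hij.trans_lt hj)]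
    exact WithBot.coe_le_coe.mpr (ha (Fin.mk_le_mk.mpr hij))
  · rw [padTuple_of_le a (not_lt.mp hj)]
    exact bot_le

lemma macaulayEval_eq_eval_macaulayPoly {s L : ℕ} (a : Fin s → ℕ) (hL : s ≤ L) (n : ℤ) :
    macaulayEval a n = (macaulayPoly (padTuple a) L).eval (n : ℚ) := by
  have hpad : ∀ i : Fin s, padTuple a i = a i := fun i => dif_pos i.isLt
  have hzero : ∀ j ∈ range L, j ∉ range s → macaulayTerm (padTuple a j) j = 0 :=
    fun j _ hj => by rw [padTuple_of_le a (not_lt.mp (mem_range.not.mp hj)), macaulayTerm_bot]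
  rw [macaulayPoly, ← sum_subset (range_subset_range.mpr hL) hzero,
    ← Fin.sum_univ_eq_sum_range, eval_finsetSum, macaulayEval]
  simp only [hpad, eval_macaulayTerm_coe]

lemma eventually_pos_eval_of_leadingCoeff_pos {𝕜 : Type*} [NormedField 𝕜] [LinearOrder 𝕜]
    [IsStrictOrderedRing 𝕜] [OrderTopology 𝕜] {p : 𝕜[X]} (hp : 0 < p.leadingCoeff) :
    ∀ᶠ x in atTop, 0 < p.eval x := by
  rcases Nat.eq_zero_or_pos p.natDegree with hdeg | hdeg
  · rw [eq_C_of_natDegree_eq_zero hdeg]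
    rw [leadingCoeff, hdeg] at hp
    exact .of_forall fun x => by rwa [eval_C]
  · exact (p.tendsto_atTop_of_leadingCoeff_nonneg (natDegree_pos_iff_degree_pos.mp hdeg)
      hp.le).eventually_gt_atTop 0

lemma leadingCoeff_macaulayPoly_sub_pos {f g : ℕ → WithBot ℕ} {L : ℕ} (hf : Antitone f)
    (hg : Antitone g) (hfL : f L = ⊥) (hgf : toLex g < toLex f) :
    0 < (macaulayPoly f L - macaulayPoly g L).leadingCoeff := by
  obtain ⟨i, hpre, hlt⟩ : ∃ i, (∀ j < i, g j = f j) ∧ g i < f i := hgf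
  obtain ⟨A, hA⟩ : ∃ A : ℕ, f i = A :=
    ⟨(f i).unbot (ne_bot_of_gt hlt), (WithBot.coe_unbot _ _).symm⟩
  have hgA : g i < A := hA ▸ hlt
  have hiL : i < L := by
    by_contra! hLi
    exact not_lt_bot (hfL ▸ hlt.trans_le (hf hLi))
  set δ : ℕ → ℚ[X] := fun j => macaulayTerm (f j) j - macaulayTerm (g j) j
  have hδ : ∀ j, (δ j).natDegree ≤ A ∧ 0 ≤ (δ j).coeff A := by
    intro j
    rcases lt_or_ge j i with hj | hj
    · simp [δ, hpre j hj]
    · have hfj : f j ≤ A := hA ▸ hf hj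
      have hgj : g j < A := (hg hj).trans_lt hgA
      refine ⟨(natDegree_sub_le _ _).trans
        (max_le (natDegree_macaulayTerm_le j hfj) (natDegree_macaulayTerm_le j hgj.le)), ?_⟩
      rw [coeff_sub, coeff_macaulayTerm_of_lt j hgj, sub_zero]
      exact coeff_macaulayTerm_nonneg j hfj
  have hδi : (δ i).coeff A = (A ! : ℚ)⁻¹ := by
    simp only [δ, coeff_sub, coeff_macaulayTerm_of_lt i hgA, hA, coeff_macaulayTerm_coe_self,
      sub_zero]
  have hcoeff : 0 < (∑ j ∈ range L, δ j).coeff A := by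
    rw [finsetSum_coeff]
    calc 0 < (A ! : ℚ)⁻¹ := by positivity
      _ = (δ i).coeff A := hδi.symm
      _ ≤ ∑ j ∈ range L, (δ j).coeff A :=
        single_le_sum (fun j _ => (hδ j).2) (mem_range.mpr hiL)
  rw [macaulayPoly, macaulayPoly, ← sum_sub_distrib, leadingCoeff,
    natDegree_eq_of_le_of_coeff_ne_zero (natDegree_sum_le_of_forall_le _ _ fun j _ => (hδ j).1)
      hcoeff.ne']
  exact hcoeff

section Comparison

variable {s t : ℕ} {a : Fin s → ℕ} {b : Fin t → ℕ}

lemma eventually_macaulayEval_lt (ha : Antitone a) (hb : Antitone b)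
    (h : toLex (padTuple b) < toLex (padTuple a)) :
    ∀ᶠ n : ℤ in atTop, macaulayEval b n < macaulayEval a n := by
  have hpos := eventually_pos_eval_of_leadingCoeff_pos <| leadingCoeff_macaulayPoly_sub_pos
    (padTuple_antitone ha) (padTuple_antitone hb) (padTuple_of_le a (le_max_left s t)) h
  filter_upwards [tendsto_intCast_atTop_atTop.eventually hpos] with n hn
  rwa [eval_sub, sub_pos, ← macaulayEval_eq_eval_macaulayPoly a (le_max_left s t),
    ← macaulayEval_eq_eval_macaulayPoly b (le_max_right s t)] at hn

lemma macaulayEval_eq_of_padTuple_eq (h : padTuple a = padTuple b) :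
    macaulayEval a = macaulayEval b := by
  funext n
  rw [macaulayEval_eq_eval_macaulayPoly a (le_max_left s t),
    macaulayEval_eq_eval_macaulayPoly b (le_max_right s t), h]

lemma eventually_macaulayEval_le_iff (ha : Antitone a) (hb : Antitone b) :
    (∀ᶠ n : ℤ in atTop, macaulayEval b n ≤ macaulayEval a n) ↔
      toLex (padTuple b) ≤ toLex (padTuple a) := by
  constructor
  · intro hle
    by_contra! hlt
    obtain ⟨n, hle_n, hlt_n⟩ := (hle.and (eventually_macaulayEval_lt hb ha hlt)).exists
    exact hlt_n.not_ge hle_n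
  · intro hle
    rcases hle.lt_or_eq with hlt | heq
    · exact (eventually_macaulayEval_lt ha hb hlt).mono fun _ => le_of_lt
    · simp [macaulayEval_eq_of_padTuple_eq (toLex_inj.mp heq)]

lemma padTuple_eq_of_eventually_macaulayEval_eq (ha : Antitone a) (hb : Antitone b)
    (h : ∀ᶠ n : ℤ in atTop, macaulayEval a n = macaulayEval b n) : padTuple a = padTuple b :=
  toLex_inj.mp <| le_antisymm
    ((eventually_macaulayEval_le_iff hb ha).mp (h.mono fun _ => le_of_eq))
    ((eventually_macaulayEval_le_iff ha hb).mp (h.mono fun _ => ge_of_eq))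

end Comparison

lemma lexGe_iff_toLex_le (f g : ℕ → WithBot ℕ) : LexGe f g ↔ toLex g ≤ toLex f := by
  rw [LexGe, le_iff_lt_or_eq, toLex_inj, eq_comm, or_comm]
  exact or_congr_left (exists_congr fun _ => and_congr_left' (forall₂_congr fun _ _ => eq_comm))

theorem stmt7_general {s t : ℕ}
    (a : Fin s → ℕ) (b : Fin t → ℕ) (ha : Antitone a) (hb : Antitone b) :
    -- eventual domination of Macaulay polynomials is lexicographic comparison:
    ((∃ N : ℤ, ∀ n ≥ N, macaulayEval b n ≤ macaulayEval a n) ↔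
      LexGe (padTuple a) (padTuple b)) ∧
    -- in particular a ↦ P_a is injective:
    ((∃ N : ℤ, ∀ n ≥ N, macaulayEval a n = macaulayEval b n) →
      padTuple a = padTuple b) ∧
    -- and the set of Macaulay polynomials is totally ordered by eventual comparison:
    ((∃ N : ℤ, ∀ n ≥ N, macaulayEval b n ≤ macaulayEval a n) ∨
      (∃ N : ℤ, ∀ n ≥ N, macaulayEval a n ≤ macaulayEval b n)) := by
  simp only [← eventually_atTop]
  rw [lexGe_iff_toLex_le, eventually_macaulayEval_le_iff ha hb,
    eventually_macaulayEval_le_iff hb ha]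
  exact ⟨Iff.rfl, padTuple_eq_of_eventually_macaulayEval_eq ha hb, le_total _ _⟩

theorem stmt7 {s t : ℕ} (hs : 1 ≤ s) (ht : 1 ≤ t)
    (a : Fin s → ℕ) (b : Fin t → ℕ) (ha : Antitone a) (hb : Antitone b) :
    -- eventual domination of Macaulay polynomials is lexicographic comparison:
    ((∃ N : ℤ, ∀ n ≥ N, macaulayEval b n ≤ macaulayEval a n) ↔
      LexGe (padTuple a) (padTuple b)) ∧
    -- in particular a ↦ P_a is injective:
    ((∃ N : ℤ, ∀ n ≥ N, macaulayEval a n = macaulayEval b n) →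
      padTuple a = padTuple b) ∧
    -- and the set of Macaulay polynomials is totally ordered by eventual comparison:
    ((∃ N : ℤ, ∀ n ≥ N, macaulayEval b n ≤ macaulayEval a n) ∨
      (∃ N : ℤ, ∀ n ≥ N, macaulayEval a n ≤ macaulayEval b n)) :=
  stmt7_general a b ha hb
end

section
/- Let X be a noetherian topological space of finite Krull dimension in which every nonempty irreducible closed subset has a generic point, let (G, ≤) be a partially ordered set, and let H : X → G be a map. Assume: (1) whenever x lies in the closure of {y}, one has H(x) ≥ H(y); and (2) for every y ∈ X there is a dense open subset U of the closure of {y} such that H(x) = H(y) for all x ∈ U. Then H is upper semi-continuous, i.e. for every ν ∈ G the set X_{≥ν} = {x ∈ X : H(x) ≥ ν} is closed in X. -/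
/-!
Let `S = {x | ν ≤ H x}`. By noetherian induction it suffices to show that `S ∩ Z` is closed for
irreducible closed `Z`, knowing this for all smaller closed sets. Let `η` be the generic point of
`Z`. If `η ∈ S`, then `Z ⊆ S` by (1). Otherwise, by (2), `H = H η` on a dense open subset of `Z`,
which therefore misses `S`; so `closure (S ∩ Z)` is a proper closed subset of `Z`, and the
induction hypothesis applies to it.
-/

open TopologicalSpace

section

variable {X : Type*} [TopologicalSpace X]

theorem TopologicalSpace.NoetherianSpace.isClosed_of_isClosed_inter_irreducible
    [NoetherianSpace X] {S : Set X}
    (h : ∀ Z : Closeds X, IsIrreducible (Z : Set X) →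
      (∀ Z' < Z, IsClosed (S ∩ Z')) → IsClosed (S ∩ Z)) :
    IsClosed S := by
  suffices ∀ Z : Closeds X, IsClosed (S ∩ Z) by simpa using this ⊤
  intro Z
  induction Z using WellFoundedLT.induction with
  | _ Z ih =>
  by_cases hpre : IsPreirreducible (Z : Set X)
  · rcases (Z : Set X).eq_empty_or_nonempty with hZ | hZ
    · simp [hZ]
    · exact h Z ⟨hZ, hpre⟩ ih
  · simp only [isPreirreducible_iff_isClosed_union_isClosed, not_forall, not_or] at hpre
    obtain ⟨z₁, z₂, hz₁, hz₂, hcover, hZz₁, hZz₂⟩ := hpre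
    lift z₁ to Closeds X using hz₁
    lift z₂ to Closeds X using hz₂
    have hsplit : S ∩ Z = S ∩ (Z ⊓ z₁ : Closeds X) ∪ S ∩ (Z ⊓ z₂ : Closeds X) := by
      simp only [Closeds.coe_inf, ← Set.inter_union_distrib_left, Set.inter_eq_left.2 hcover]
    rw [hsplit]
    exact (ih _ (inf_lt_left.2 hZz₁)).union (ih _ (inf_lt_left.2 hZz₂))

theorem StableUnderSpecialization.isClosed_of_notMem_closure
    [NoetherianSpace X] [QuasiSober X] {S : Set X} (hS : StableUnderSpecialization S)
    (h : ∀ y ∉ S, y ∉ closure (S ∩ closure {y})) :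
    IsClosed S := by
  refine NoetherianSpace.isClosed_of_isClosed_inter_irreducible fun Z hZ ih => ?_
  obtain ⟨η, hη : closure {η} = Z⟩ := QuasiSober.sober hZ Z.isClosed
  by_cases hηS : η ∈ S
  · have hZS : (Z : Set X) ⊆ S := fun x hx =>
      hS (specializes_iff_mem_closure.2 (hη ▸ hx)) hηS
    rw [Set.inter_eq_right.2 hZS]
    exact Z.isClosed
  · let Z' : Closeds X := ⟨closure (S ∩ Z), isClosed_closure⟩
    have hZ'Z : Z' ≤ Z := closure_minimal Set.inter_subset_right Z.isClosed
    have hηZ' : η ∉ Z' := by simpa [Z', hη] using h η hηS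
    have hηZ : η ∈ Z := by simpa [hη] using subset_closure (Set.mem_singleton η)
    have hlt : Z' < Z := lt_of_le_of_ne hZ'Z fun heq => hηZ' (heq ▸ hηZ)
    have hSZ : S ∩ Z = S ∩ Z' :=
      subset_antisymm (Set.subset_inter Set.inter_subset_left subset_closure)
        (Set.inter_subset_inter_right _ hZ'Z)
    rw [hSZ]
    exact ih Z' hlt

theorem notMem_closure_closure_singleton_diff {y : X} {U : Set X}
    (hUo : IsOpen ((↑) ⁻¹' U : Set (closure ({y} : Set X))))
    (hUne : ((↑) ⁻¹' U : Set (closure ({y} : Set X))).Nonempty) :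
    y ∉ closure (closure {y} \ U) := by
  obtain ⟨V, hV, hVU⟩ := isOpen_induced_iff.1 hUo
  have hdiff : closure {y} \ U = closure {y} \ V := by
    ext x
    refine and_congr_right fun hx => not_congr ?_
    exact (Set.ext_iff.1 hVU ⟨x, hx⟩).symm
  have hyV : y ∈ V := by
    obtain ⟨⟨x, hx⟩, hxU⟩ := hUne
    refine isGenericPoint_closure.mem_open_set_iff hV |>.2 ⟨x, hx, ?_⟩
    exact (Set.ext_iff.1 hVU ⟨x, hx⟩).2 hxU
  rw [hdiff, (isClosed_closure.sdiff hV).closure_eq]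
  exact fun hy => hy.2 hyV

end

theorem stmt9_general {X G : Type*} [TopologicalSpace X] [TopologicalSpace.NoetherianSpace X]
    [PartialOrder G]
    -- X is Zariski: every nonempty irreducible closed subset has a generic point:
    (hgen : ∀ C : Set X, IsIrreducible C → IsClosed C → ∃ x : X, closure {x} = C)
    (H : X → G)
    -- (1) specialization increases H:
    (h1 : ∀ x y : X, x ∈ closure ({y} : Set X) → H y ≤ H x)
    -- (2) H is generically constant: for every y there is a dense open subset U of
    -- the closure of {y} on which H is constant equal to H y:
    (h2 : ∀ y : X, ∃ U : Set X, U ⊆ closure ({y} : Set X) ∧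
      IsOpen ((fun z : closure ({y} : Set X) => (z : X)) ⁻¹' U) ∧
      Dense ((fun z : closure ({y} : Set X) => (z : X)) ⁻¹' U) ∧
      ∀ x ∈ U, H x = H y) :
    -- then H is upper semi-continuous:
    ∀ ν : G, IsClosed {x : X | ν ≤ H x} := by
  intro ν
  have : QuasiSober X := ⟨fun hC hC' => hgen _ hC hC'⟩
  refine StableUnderSpecialization.isClosed_of_notMem_closure
    (fun x y hxy hx => hx.trans (h1 y x (specializes_iff_mem_closure.1 hxy))) fun y hy => ?_
  obtain ⟨U, -, hUo, hUd, hHU⟩ := h2 y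
  have : Nonempty (closure ({y} : Set X)) := ⟨⟨y, subset_closure rfl⟩⟩
  refine fun hmem => notMem_closure_closure_singleton_diff hUo hUd.nonempty (closure_mono ?_ hmem)
  rintro x ⟨hx, hxy⟩
  exact ⟨hxy, fun hxU => hy (hx.trans_eq (hHU x hxU))⟩

theorem stmt9 {X G : Type*} [TopologicalSpace X] [TopologicalSpace.NoetherianSpace X]
    [PartialOrder G]
    -- X has finite Krull dimension:
    (hdim : topologicalKrullDim X < ⊤)
    -- X is Zariski: every nonempty irreducible closed subset has a generic point:
    (hgen : ∀ C : Set X, IsIrreducible C → IsClosed C → ∃ x : X, closure {x} = C)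
    (H : X → G)
    -- (1) specialization increases H:
    (h1 : ∀ x y : X, x ∈ closure ({y} : Set X) → H y ≤ H x)
    -- (2) H is generically constant: for every y there is a dense open subset U of
    -- the closure of {y} on which H is constant equal to H y:
    (h2 : ∀ y : X, ∃ U : Set X, U ⊆ closure ({y} : Set X) ∧
      IsOpen ((fun z : closure ({y} : Set X) => (z : X)) ⁻¹' U) ∧
      Dense ((fun z : closure ({y} : Set X) => (z : X)) ⁻¹' U) ∧
      ∀ x ∈ U, H x = H y) :
    -- then H is upper semi-continuous:
    ∀ ν : G, IsClosed {x : X | ν ≤ H x} :=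
  stmt9_general hgen H h1 h2
end
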